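/- For every n ≥ 1, every subset H ⊆ P satisfying condition (H1) in the incidence geometry G_n is of the form C_p = {x ∈ P : ⟨p,x⟩ = 0} or of the form H_p = {x ∈ P : Q_p(x) = 0} for some p ∈ V_n. -/

import Mathlib

/-- The symplectic vector space `V_n = (ZMod 2)^(2n)` of the n-qubit real Pauli group. -/
abbrev V (n : ℕ) : Type := Fin (2 * n) → ZMod 2

/-- The index `2i-1` (0-based: `2i`). -/
def i0 {n : ℕ} (i : Fin n) : Fin (2 * n) := ⟨2 * i.1, by have := i.isLt; omega⟩

/-- The index `2i` (0-based: `2i+1`). -/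
def i1 {n : ℕ} (i : Fin n) : Fin (2 * n) := ⟨2 * i.1 + 1, by have := i.isLt; omega⟩

/-- The symplectic form `⟨x,y⟩ = Σ_{i=1}^n (x_{2i−1} y_{2i} + x_{2i} y_{2i−1})`. -/
def sform {n : ℕ} (x y : V n) : ZMod 2 :=
  ∑ i : Fin n, (x (i0 i) * y (i1 i) + x (i1 i) * y (i0 i))

/-- The point set `P = V_n \ {0}` of the incidence geometry `G_n`. -/
def P (n : ℕ) : Set (V n) := {x | x ≠ 0}

/-- The line set `L = {{a,b,a+b} : a,b ∈ P, a ≠ b, ⟨a,b⟩ = 0}` of `G_n`. -/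
def Lines (n : ℕ) : Set (Set (V n)) :=
  {l | ∃ a b : V n, a ∈ P n ∧ b ∈ P n ∧ a ≠ b ∧ sform a b = 0 ∧ l = {a, b, a + b}}

/-- A subset `H ⊆ P` satisfies condition (H1) if every line meets it in exactly
one point or is contained in it. -/
def IsH1 {n : ℕ} (H : Set (V n)) : Prop :=
  H ⊆ P n ∧ ∀ l ∈ Lines n, (H ∩ l).ncard = 1 ∨ l ⊆ H

/-- A geometric hyperplane: a subset satisfying (H1) which is not the full point set. -/
def IsHyperplane {n : ℕ} (H : Set (V n)) : Prop := IsH1 H ∧ H ≠ P n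

/-- `A ⊞ B`: the complement in `P` of the symmetric difference of `A` and `B`. -/
def boxAdd {n : ℕ} (A B : Set (V n)) : Set (V n) := P n \ (symmDiff A B)

/-- The quadratic form `Q_0(x) = Σ_{i=1}^n x_{2i−1} x_{2i}`. -/
def Q0 {n : ℕ} (x : V n) : ZMod 2 := ∑ i : Fin n, x (i0 i) * x (i1 i)

/-- The quadratic form `Q_p(x) = Q_0(x) + ⟨p,x⟩`. -/
def Qf {n : ℕ} (p x : V n) : ZMod 2 := Q0 x + sform p x

/-- The perp-set hyperplane `C_p = {x ∈ P : ⟨p,x⟩ = 0}`. -/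
def Cset {n : ℕ} (p : V n) : Set (V n) := {x ∈ P n | sform p x = 0}

/-- The quadric hyperplane `H_p = {x ∈ P : Q_p(x) = 0}`. -/
def Hset {n : ℕ} (p : V n) : Set (V n) := {x ∈ P n | Qf p x = 0}

/-- The symplectic transvection `t_p : x ↦ x + ⟨p,x⟩·p`. -/
def tv {n : ℕ} (p : V n) (x : V n) : V n := x + sform p x • p

/-!
Let `g` be the indicator function of `P \ H`, so that `g 0 = 0` and `H = {x ∈ P | g x = 0}`.
Condition (H1) says exactly that `g (a + b) = g a + g b` whenever `⟨a, b⟩ = 0`, i.e. the polar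
`g (a + b) + g a + g b` vanishes on orthogonal pairs. Moving from one pair with `⟨a, b⟩ = 1` to
another through shared partners shows that the polar takes a single value `c` on all such pairs,
so it equals `c ⟨·, ·⟩`. As `Q_0` has polar `⟨·, ·⟩`, the function `g + c Q_0` is additive, hence
equal to `⟨p, ·⟩` by nondegeneracy of the form, and `H` is `C_p` (`c = 0`) or `H_p` (`c = 1`).
-/

lemma zmod_two_eq_zero_or_one (z : ZMod 2) : z = 0 ∨ z = 1 := by
  revert z; decide

lemma LinearMap.BilinForm.IsAlt.apply_comm {W : Type*} [AddCommGroup W] [Module (ZMod 2) W]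
    {B : LinearMap.BilinForm (ZMod 2) W} (hB : B.IsAlt) (x y : W) : B x y = B y x := by
  rw [← hB.neg_eq, ZModModule.neg_eq_self]

namespace QuadraticMap

variable {W : Type*} [AddCommGroup W] [Module (ZMod 2) W] {B : LinearMap.BilinForm (ZMod 2) W}

lemma polar_self_add_right (g : W → ZMod 2) (a b : W) : polar g a (a + b) = polar g a b := by
  simp only [polar, ZModModule.sub_eq_add, ← add_assoc, ZModModule.add_self, zero_add]
  abel

variable {g : W → ZMod 2} (hg : ∀ a b, B a b = 0 → polar g a b = 0)
include hg

lemma polar_add_right_of_apply_eq_zero {a b c : W} (hac : B a c = 0) (hbc : B b c = 0) :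
    polar g a (b + c) = polar g a b := by
  have hbc' : g (b + c) = g b + g c := by rw [QuadraticMap.map_add g b c, hg b c hbc, add_zero]
  have habc : g (a + b + c) = g (a + b) + g c := by
    have hc : B (a + b) c = 0 := by rw [LinearMap.map_add₂, hac, hbc, add_zero]
    rw [QuadraticMap.map_add g (a + b) c, hg _ _ hc, add_zero]
  simp only [polar, ← add_assoc, habc, hbc']
  ring

variable (hB : B.IsAlt)
include hB

lemma polar_eq_polar_of_apply_eq_one {a b b' : W} (hb : B a b = 1) (hb' : B a b' = 1) :
    polar g a b = polar g a b' := by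
  have one_add_one : (1 : ZMod 2) + 1 = 0 := rfl
  rcases zmod_two_eq_zero_or_one (B b b') with hbb' | hbb'
  · have hac : B a (b + b') = 0 := by rw [map_add, hb, hb', one_add_one]
    have hbc : B b (b + b') = 0 := by rw [map_add, hB.self_eq_zero, hbb', add_zero]
    have := polar_add_right_of_apply_eq_zero hg hac hbc
    rwa [← add_assoc, ZModModule.add_self, zero_add, eq_comm] at this
  · set d := a + b + b'
    have hsum : b + b' = a + d := by
      simp only [d, ← add_assoc, ZModModule.add_self, zero_add]
    have had : B a d = 0 := by
      simp only [d, map_add, hB.self_eq_zero a, hb, hb', zero_add, one_add_one]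
    have hbd : B b d = 0 := by
      simp only [d, map_add, hB.self_eq_zero b, hB.apply_comm b a, hb, hbb', add_zero, one_add_one]
    have hb'd : B b' d = 0 := by
      simp only [d, map_add, hB.self_eq_zero b', hB.apply_comm b' a, hB.apply_comm b' b, hb', hbb',
        add_zero, one_add_one]
    have e : polar g b b' = polar g b a := by
      rw [← polar_self_add_right, hsum, polar_add_right_of_apply_eq_zero hg hbd had]
    have e' : polar g b' b = polar g b' a := by
      rw [← polar_self_add_right, add_comm, hsum, polar_add_right_of_apply_eq_zero hg hb'd had]
    rw [polar_comm g a b, ← e, polar_comm, e', polar_comm]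

lemma polar_eq_polar_of_common_partner {a b c d x : W} (hab : B a b = 1) (hcd : B c d = 1)
    (hax : B a x = 1) (hcx : B c x = 1) : polar g a b = polar g c d := by
  have hxa : B x a = 1 := by rwa [hB.apply_comm]
  have hxc : B x c = 1 := by rwa [hB.apply_comm]
  calc polar g a b = polar g a x := polar_eq_polar_of_apply_eq_one hg hB hab hax
    _ = polar g x c := by
      rw [polar_comm]; exact polar_eq_polar_of_apply_eq_one hg hB hxa hxc
    _ = polar g c d := by
      rw [polar_comm]; exact polar_eq_polar_of_apply_eq_one hg hB hcx hcd

lemma polar_eq_polar_of_apply_eq_one_of_apply_eq_one {a b c d : W} (hab : B a b = 1)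
    (hcd : B c d = 1) : polar g a b = polar g c d := by
  rcases zmod_two_eq_zero_or_one (B a d) with had | had
  · rcases zmod_two_eq_zero_or_one (B c b) with hcb | hcb
    · refine polar_eq_polar_of_common_partner hg hB hab hcd (x := b + d) ?_ ?_
      · rw [map_add, hab, had, add_zero]
      · rw [map_add, hcb, hcd, zero_add]
    · exact polar_eq_polar_of_common_partner hg hB hab hcd hab hcb
  · exact polar_eq_polar_of_common_partner hg hB hab hcd had hcd

theorem exists_polar_eq_mul : ∃ c : ZMod 2, ∀ a b, polar g a b = c * B a b := by
  by_cases h : ∃ a b, B a b = 1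
  · obtain ⟨a, b, hab⟩ := h
    refine ⟨polar g a b, fun x y => ?_⟩
    rcases zmod_two_eq_zero_or_one (B x y) with hxy | hxy
    · rw [hxy, mul_zero, hg x y hxy]
    · rw [hxy, mul_one, polar_eq_polar_of_apply_eq_one_of_apply_eq_one hg hB hxy hab]
  · push Not at h
    refine ⟨0, fun x y => ?_⟩
    rw [zero_mul, hg x y ((zmod_two_eq_zero_or_one _).resolve_right (h x y))]

end QuadraticMap

open QuadraticMap (polar)

lemma Set.indicator_add_add_eq_zero_of_ncard_inter_eq_one_or_subset {α : Type*} {D H : Set α}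
    {a b c : α} (hab : a ≠ b) (hac : a ≠ c) (hbc : b ≠ c) (ha : a ∈ D) (hb : b ∈ D) (hc : c ∈ D)
    (h : (H ∩ {a, b, c}).ncard = 1 ∨ {a, b, c} ⊆ H) :
    (D \ H).indicator 1 a + (D \ H).indicator 1 b + (D \ H).indicator (1 : α → ZMod 2) c = 0 := by
  by_cases ha' : a ∈ H <;> by_cases hb' : b ∈ H <;> by_cases hc' : c ∈ H <;>
    simp [Set.indicator, Set.insert_subset_iff, Set.inter_insert_of_mem,
      Set.inter_insert_of_notMem, ZModModule.add_self, *] at h ⊢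

lemma Set.eq_setOf_indicator_diff_eq_zero {α : Type*} {D H : Set α} (hH : H ⊆ D) :
    H = {x ∈ D | (D \ H).indicator (1 : α → ZMod 2) x = 0} := by
  ext x
  by_cases hx : x ∈ H
  · simp [hx, hH hx]
  · simp [Set.indicator, hx]

section Symplectic

variable {n : ℕ}

lemma sform_add_left (a b c : V n) : sform (a + b) c = sform a c + sform b c := by
  simp only [sform, Pi.add_apply, ← Finset.sum_add_distrib]
  exact Finset.sum_congr rfl fun _ _ => by ring

lemma sform_smul_left (r : ZMod 2) (a b : V n) : sform (r • a) b = r * sform a b := by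
  simp only [sform, Pi.smul_apply, smul_eq_mul, Finset.mul_sum]
  exact Finset.sum_congr rfl fun _ _ => by ring

lemma sform_comm (a b : V n) : sform a b = sform b a :=
  Finset.sum_congr rfl fun _ _ => by ring

lemma sform_self (a : V n) : sform a a = 0 := by
  simp only [sform, mul_comm (a (i1 _)), ← two_mul, CharTwo.two_eq_zero, zero_mul,
    Finset.sum_const_zero]

variable (n) in
def sformBilin : LinearMap.BilinForm (ZMod 2) (V n) :=
  LinearMap.mk₂ (ZMod 2) sform sform_add_left sform_smul_left
    (fun a b c => by simp only [sform_comm a, sform_add_left])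
    (fun r a b => by simp only [sform_comm a, sform_smul_left, smul_eq_mul])

@[simp]
lemma sformBilin_apply (a b : V n) : sformBilin n a b = sform a b := rfl

lemma sformBilin_isAlt : (sformBilin n).IsAlt := sform_self

lemma sform_single_i0 (x : V n) (i : Fin n) : sform x (Pi.single (i0 i) 1) = x (i1 i) := by
  rw [sform, Finset.sum_eq_single i]
  · simp [i0, i1, Fin.ext_iff]
  · intro j _ hji
    have := Fin.val_ne_of_ne hji
    simp only [Pi.single_apply, i0, i1, Fin.ext_iff]
    split_ifs <;> first | omega | simp
  · simp

lemma sform_single_i1 (x : V n) (i : Fin n) : sform x (Pi.single (i1 i) 1) = x (i0 i) := by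
  rw [sform, Finset.sum_eq_single i]
  · simp [i0, i1, Fin.ext_iff]
  · intro j _ hji
    have := Fin.val_ne_of_ne hji
    simp only [Pi.single_apply, i0, i1, Fin.ext_iff]
    split_ifs <;> first | omega | simp
  · simp

lemma exists_eq_i0_or_eq_i1 (j : Fin (2 * n)) : ∃ i, j = i0 i ∨ j = i1 i :=
  ⟨⟨j / 2, by omega⟩, by simp only [i0, i1, Fin.ext_iff]; omega⟩

lemma sformBilin_nondegenerate : (sformBilin n).Nondegenerate := by
  refine .ofSeparatingLeft fun x hx => funext fun j => ?_
  obtain ⟨i, rfl | rfl⟩ := exists_eq_i0_or_eq_i1 j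
  · rw [← sform_single_i1 x i, ← sformBilin_apply, hx, Pi.zero_apply]
  · rw [← sform_single_i0 x i, ← sformBilin_apply, hx, Pi.zero_apply]

lemma exists_sform_eq (f : V n →+ ZMod 2) : ∃ p : V n, ∀ x, f x = sform p x :=
  ⟨((sformBilin n).toDual sformBilin_nondegenerate).symm (f.toZModLinearMap 2),
    fun x => by rw [← sformBilin_apply, LinearMap.BilinForm.apply_toDual_symm_apply]; rfl⟩

lemma polar_Q0 (a b : V n) : polar Q0 a b = sform a b := by
  simp only [polar, Q0, sform, Pi.add_apply, ← Finset.sum_sub_distrib]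
  exact Finset.sum_congr rfl fun _ _ => by ring

theorem exists_eq_sform_or_eq_Qf {g : V n → ZMod 2}
    (hg : ∀ a b, sform a b = 0 → polar g a b = 0) : ∃ p : V n, g = sform p ∨ g = Qf p := by
  obtain ⟨c, hc⟩ := QuadraticMap.exists_polar_eq_mul (B := sformBilin n) hg sformBilin_isAlt
  have hpolar (a b : V n) : polar (g + c • Q0) a b = 0 := by
    rw [QuadraticMap.polar_add, QuadraticMap.polar_smul, hc, polar_Q0, sformBilin_apply,
      smul_eq_mul, ZModModule.add_self]
  obtain ⟨p, hp⟩ := exists_sform_eq <| AddMonoidHom.mk' (g + c • Q0) fun a b => by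
    rw [QuadraticMap.map_add (g + c • Q0) a b, hpolar, add_zero]
  refine ⟨p, ?_⟩
  rcases zmod_two_eq_zero_or_one c with rfl | rfl
  · left
    funext x
    simpa using hp x
  · right
    funext x
    have hx : g x + Q0 x = sform p x := by simpa using hp x
    rw [Qf, ← hx, add_comm (g x), ← add_assoc, ZModModule.add_self, zero_add]

lemma polar_indicator_eq_zero_of_isH1 {H : Set (V n)} (hH : IsH1 H) {a b : V n}
    (hab : sform a b = 0) : polar ((P n \ H).indicator (1 : V n → ZMod 2)) a b = 0 := by
  have h0 : (P n \ H).indicator (1 : V n → ZMod 2) 0 = 0 :=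
    Set.indicator_of_notMem (fun h => h.1 rfl) _
  rcases eq_or_ne a 0 with rfl | ha
  · simp [polar, h0]
  rcases eq_or_ne b 0 with rfl | hb
  · simp [polar, h0]
  rcases eq_or_ne a b with rfl | hne
  · simp [polar, h0, ZModModule.add_self, ZModModule.sub_eq_add]
  have hab0 : a + b ≠ 0 := fun h => hne (by
    rwa [add_eq_zero_iff_eq_neg, ZModModule.neg_eq_self] at h)
  have hline := hH.2 _ ⟨a, b, ha, hb, hne, hab, rfl⟩
  rw [polar, ZModModule.sub_eq_add, ZModModule.sub_eq_add, add_rotate]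
  exact Set.indicator_add_add_eq_zero_of_ncard_inter_eq_one_or_subset hne (left_ne_add.mpr hb)
    (right_ne_add.mpr ha) ha hb hab0 hline

end Symplectic

theorem stmt8_general (n : ℕ) (H : Set (V n)) (hH : IsH1 H) :
    ∃ p : V n, H = Cset p ∨ H = Hset p := by
  have hH_eq := Set.eq_setOf_indicator_diff_eq_zero hH.1
  obtain ⟨p, hp | hp⟩ := exists_eq_sform_or_eq_Qf fun a b hab =>
    polar_indicator_eq_zero_of_isH1 hH hab
  · exact ⟨p, .inl (by rw [hH_eq, hp]; rfl)⟩
  · exact ⟨p, .inr (by rw [hH_eq, hp]; rfl)⟩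

theorem stmt8 (n : ℕ) (hn : 1 ≤ n) (H : Set (V n)) (hH : IsH1 H) :
    ∃ p : V n, H = Cset p ∨ H = Hset p :=
  stmt8_general n H hH
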